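/- Let r ≥ 1 and γ ≥ 1. There exists a constant C depending only on r and γ such that for every real Banach space X and every compact set K ⊂ X for which Λ := sup_{m≥0} (m+1)^r δ*_{m,γ}(K)_X is finite, one has ε_n(K)_X ≤ C (n+1)^{-r} Λ for all n ≥ 0. -/

import Mathlib

/-!
Cover `K` at the dyadic scales `2 ^ J` by induction on `J`. Given a cover by balls of radius `ρ`,
take a stable scheme `(a, M)` with `m + 1 = 2 ^ (J + 1)` and error `e`. On `K ∩ closedBall c ρ`
the encoder `a` has image of `‖·‖_Y`-diameter at most `2γρ`, so by a volume argument in the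
`m`-dimensional space `(ℝ^m, ‖·‖_Y)` that image has an `e / γ`-net of at most
`((4γ²ρ + e) / e) ^ m` points, and decoding the net by `M` gives balls of radius `2e` covering
`K ∩ closedBall c ρ`. Since `ρ / e = 2 ^ (r + 1)`, each step multiplies the number of balls by
`2 ^ (B m)` for a constant `B = B(r, γ)`, so `2 ^ O(B 2 ^ J)` balls of radius `2Λ 2 ^ (-J r)`
cover `K`, which is the claimed bound for `n ≈ B 2 ^ J`.
-/

open Metric

def IsNorm {n : ℕ} (nrm : (Fin n → ℝ) → ℝ) : Prop :=
  (∀ x, 0 ≤ nrm x) ∧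
  (∀ x, nrm x = 0 → x = 0) ∧
  (∀ (c : ℝ) (x), nrm (c • x) = |c| * nrm x) ∧
  (∀ x y, nrm (x + y) ≤ nrm x + nrm y)

noncomputable def stableWidth (X : Type*) [NormedAddCommGroup X]
    (K : Set X) (n : ℕ) (γ : ℝ) : ℝ :=
  sInf { d | ∃ (nrm : (Fin n → ℝ) → ℝ) (a : X → Fin n → ℝ) (M : (Fin n → ℝ) → X),
    IsNorm nrm ∧
    (∀ f ∈ K, ∀ g ∈ K, nrm (a f - a g) ≤ γ * ‖f - g‖) ∧
    (∀ x y, ‖M x - M y‖ ≤ γ * nrm (x - y)) ∧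
    d = ⨆ f : K, ‖(f : X) - M (a (f : X))‖ }

noncomputable def modStableWidth (X : Type*) [NormedAddCommGroup X]
    (K : Set X) (n : ℕ) (γ : ℝ) : ℝ :=
  sInf { d | ∃ (nrm : (Fin n → ℝ) → ℝ) (a : X → Fin n → ℝ) (M : (Fin n → ℝ) → X),
    IsNorm nrm ∧
    (∀ f g : X, nrm (a f - a g) ≤ γ * ‖f - g‖) ∧
    (∀ x y, ‖M x - M y‖ ≤ γ * nrm (x - y)) ∧
    d = ⨆ f : K, ‖(f : X) - M (a (f : X))‖ }

noncomputable def entropyNumber (X : Type*) [NormedAddCommGroup X] (K : Set X) (n : ℕ) : ℝ :=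
  sInf { ε : ℝ | 0 < ε ∧ ∃ T : Finset X, T.card ≤ 2 ^ n ∧ K ⊆ ⋃ c ∈ T, closedBall c ε }

open scoped NNReal ENNReal
open MeasureTheory Module

section Packing

variable {E : Type*} [NormedAddCommGroup E] [NormedSpace ℝ E] [FiniteDimensional ℝ E]

theorem Finset.card_le_of_isSeparated_of_subset_closedBall {s : Finset E} {x : E} {R : ℝ}
    {η : ℝ≥0} (hη : 0 < η) (hR : 0 ≤ R) (hsep : IsSeparated η (s : Set E))
    (hs : (s : Set E) ⊆ closedBall x R) :
    (s.card : ℝ) ≤ ((2 * R + η) / η) ^ finrank ℝ E := by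
  borelize E
  let μ : Measure E := Measure.addHaar
  have hη2 : (0 : ℝ) < η / 2 := by positivity
  have hdisj : (s : Set E).PairwiseDisjoint fun p => ball p (η / 2) := by
    intro p hp q hq hpq
    apply ball_disjoint_ball
    have : (η : ℝ≥0∞) < edist p q := hsep hp hq hpq
    rw [edist_nndist, ENNReal.coe_lt_coe, ← NNReal.coe_lt_coe, coe_nndist] at this
    linarith
  have hsub : (⋃ p ∈ s, ball p (η / 2)) ⊆ ball x (R + η / 2) :=
    Set.iUnion₂_subset fun p hp => ball_subset_ball' (by linarith [mem_closedBall.1 (hs hp)])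
  have key : (s.card : ℝ≥0∞) * ENNReal.ofReal ((η / 2 : ℝ) ^ finrank ℝ E) * μ (ball 0 1) ≤
      ENNReal.ofReal ((R + η / 2) ^ finrank ℝ E) * μ (ball 0 1) :=
    calc (s.card : ℝ≥0∞) * ENNReal.ofReal ((η / 2 : ℝ) ^ finrank ℝ E) * μ (ball 0 1)
        = μ (⋃ p ∈ s, ball p (η / 2)) := by
          rw [measure_biUnion_finset hdisj fun _ _ => measurableSet_ball]
          simp only [μ.addHaar_ball_of_pos _ hη2, Finset.sum_const, nsmul_eq_mul, mul_assoc]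
      _ ≤ μ (ball x (R + η / 2)) := measure_mono hsub
      _ = ENNReal.ofReal ((R + η / 2) ^ finrank ℝ E) * μ (ball 0 1) :=
        μ.addHaar_ball_of_pos _ (by linarith)
  have key' := (ENNReal.mul_le_mul_iff_left (measure_ball_pos μ _ zero_lt_one).ne'
    measure_ball_lt_top.ne).1 key
  rw [← ENNReal.ofReal_natCast, ← ENNReal.ofReal_mul (by positivity),
    ENNReal.ofReal_le_ofReal_iff (by positivity), ← le_div_iff₀ (by positivity), ← div_pow] at key'
  calc (s.card : ℝ) ≤ ((R + η / 2) / (η / 2)) ^ finrank ℝ E := key'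
    _ = ((2 * R + η) / η) ^ finrank ℝ E := by congr 1; field_simp

theorem Metric.packingNumber_ne_top_of_subset_closedBall {A : Set E} {x : E} {R : ℝ} {η : ℝ≥0}
    (hη : 0 < η) (hR : 0 ≤ R) (hA : A ⊆ closedBall x R) : packingNumber η A ≠ ⊤ := by
  set N := ⌊((2 * R + η) / η) ^ finrank ℝ E⌋₊
  refine ne_top_of_le_ne_top (ENat.natCast_ne_top N) (iSup₂_le fun C hCA => iSup_le fun hC => ?_)
  by_contra! hlt
  obtain ⟨t, htC, ht⟩ := Set.exists_subset_encard_eq (Order.add_one_le_of_lt hlt)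
  have htfin : t.Finite := Set.finite_of_encard_eq_coe ht
  have hcard : htfin.toFinset.card = N + 1 := by
    rw [← Nat.cast_inj (R := ℕ∞), ← Set.encard_coe_eq_coe_finsetCard, htfin.coe_toFinset, ht]
    rfl
  have := (htfin.toFinset).card_le_of_isSeparated_of_subset_closedBall hη hR
    (by simpa using hC.subset htC) (by simpa using htC.trans (hCA.trans hA))
  rw [hcard, Nat.cast_succ] at this
  exact (Nat.lt_floor_add_one _).not_ge this

theorem Metric.exists_finset_isCover_card_le {A : Set E} {x : E} {R : ℝ} {η : ℝ≥0} (hη : 0 < η)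
    (hR : 0 ≤ R) (hA : A ⊆ closedBall x R) :
    ∃ C : Finset E, ↑C ⊆ A ∧ IsCover η A C ∧ (C.card : ℝ) ≤ ((2 * R + η) / η) ^ finrank ℝ E := by
  have htop := packingNumber_ne_top_of_subset_closedBall hη hR hA
  have hfin : (maximalSeparatedSet η A).Finite := by
    rw [← Set.encard_ne_top_iff, encard_maximalSeparatedSet htop]
    exact htop
  refine ⟨hfin.toFinset, (by simpa using maximalSeparatedSet_subset),
    by simpa using isCover_maximalSeparatedSet htop, ?_⟩
  exact Finset.card_le_of_isSeparated_of_subset_closedBall hη hR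
    (by simpa using isSeparated_maximalSeparatedSet)
    (by simpa using maximalSeparatedSet_subset.trans hA)

end Packing

section CoordSpace

variable {m : ℕ} {nrm : (Fin m → ℝ) → ℝ}

/-- `Fin m → ℝ` with the norm `nrm` in place of the sup norm. -/
def CoordSpace (_nrm : (Fin m → ℝ) → ℝ) : Type := Fin m → ℝ

instance : AddCommGroup (CoordSpace nrm) := inferInstanceAs (AddCommGroup (Fin m → ℝ))
instance : Module ℝ (CoordSpace nrm) := inferInstanceAs (Module ℝ (Fin m → ℝ))
instance : FiniteDimensional ℝ (CoordSpace nrm) := inferInstanceAs (FiniteDimensional ℝ (Fin m → ℝ))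
instance : Norm (CoordSpace nrm) := ⟨nrm⟩

theorem IsNorm.normedSpaceCore (h : IsNorm nrm) : NormedSpace.Core ℝ (CoordSpace nrm) where
  norm_nonneg := h.1
  norm_smul c x := h.2.2.1 c x
  norm_triangle := h.2.2.2
  norm_eq_zero_iff x := ⟨h.2.1 x, fun hx => by
    subst hx
    show nrm 0 = 0
    simpa using h.2.2.1 0 0⟩

theorem IsNorm.exists_finset_net (h : IsNorm nrm) {A : Set (Fin m → ℝ)} {T η : ℝ} (hη : 0 < η)
    (hT : 0 ≤ T) (hA : ∀ x ∈ A, ∀ y ∈ A, nrm (x - y) ≤ T) :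
    ∃ P : Finset (Fin m → ℝ), (P.card : ℝ) ≤ ((2 * T + η) / η) ^ m ∧
      ∀ x ∈ A, ∃ p ∈ P, nrm (x - p) ≤ η := by
  rcases A.eq_empty_or_nonempty with rfl | ⟨x₀, hx₀⟩
  · exact ⟨∅, by simp; positivity, by simp⟩
  let := NormedAddCommGroup.ofCore h.normedSpaceCore
  let := NormedSpace.ofCore h.normedSpaceCore
  have hdist (x y : CoordSpace nrm) : dist x y = nrm (x - y) := dist_eq_norm x y
  obtain ⟨P, -, hcover, hcard⟩ := exists_finset_isCover_card_le (E := CoordSpace nrm)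
    (A := A) (x := x₀) (η := ⟨η, hη.le⟩) hη hT fun y hy =>
      mem_closedBall.2 ((hdist y x₀).trans_le (hA y hy x₀ hx₀))
  rw [show finrank ℝ (CoordSpace nrm) = m from Module.finrank_fin_fun ℝ] at hcard
  refine ⟨P, hcard, fun x hx => ?_⟩
  obtain ⟨p, hp, hxp⟩ := Set.mem_iUnion₂.1 (hcover.subset_iUnion_closedBall hx)
  exact ⟨p, hp, (hdist x p).symm.trans_le hxp⟩

end CoordSpace

section Covering

variable {X : Type*} [NormedAddCommGroup X] {K : Set X} {n : ℕ} {γ : ℝ}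

/-- An admissible triple `(‖·‖_Y, a, M)` in the infimum defining `stableWidth X K n γ`. -/
structure StableScheme (X : Type*) [NormedAddCommGroup X] (K : Set X) (n : ℕ) (γ : ℝ) where
  nrm : (Fin n → ℝ) → ℝ
  a : X → Fin n → ℝ
  M : (Fin n → ℝ) → X
  isNorm : IsNorm nrm
  a_lipschitz : ∀ f ∈ K, ∀ g ∈ K, nrm (a f - a g) ≤ γ * ‖f - g‖
  M_lipschitz : ∀ x y, ‖M x - M y‖ ≤ γ * nrm (x - y)

namespace StableScheme

def zero (hγ : 0 ≤ γ) : StableScheme X K n γ where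
  nrm := norm
  a _ := 0
  M _ := 0
  isNorm := ⟨norm_nonneg, fun _ => norm_eq_zero.1, fun c x => by simp [norm_smul], norm_add_le⟩
  a_lipschitz _ _ _ _ := by simpa using mul_nonneg hγ (norm_nonneg _)
  M_lipschitz _ _ := by simpa using mul_nonneg hγ (norm_nonneg _)

theorem bddAbove_range_error (S : StableScheme X K n γ) (hγ : 0 ≤ γ) (hK : Bornology.IsBounded K) :
    BddAbove (Set.range fun f : K => ‖(f : X) - S.M (S.a f)‖) := by
  rcases K.eq_empty_or_nonempty with rfl | ⟨f₀, hf₀⟩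
  · simp [Set.range_eq_empty]
  obtain ⟨C, hC⟩ := Metric.isBounded_iff.1 hK
  refine ⟨‖f₀ - S.M (S.a f₀)‖ + (1 + γ * γ) * C, ?_⟩
  rintro _ ⟨⟨g, hg⟩, rfl⟩
  have hgf : ‖g - f₀‖ ≤ C := by simpa [dist_eq_norm] using hC hg hf₀
  have hM : ‖S.M (S.a f₀) - S.M (S.a g)‖ ≤ γ * γ * C :=
    calc ‖S.M (S.a f₀) - S.M (S.a g)‖ ≤ γ * S.nrm (S.a f₀ - S.a g) := S.M_lipschitz _ _
      _ ≤ γ * (γ * ‖g - f₀‖) := by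
        rw [← norm_neg (g - f₀), neg_sub]
        exact mul_le_mul_of_nonneg_left (S.a_lipschitz f₀ hf₀ g hg) hγ
      _ ≤ γ * γ * C := by rw [← mul_assoc]; exact mul_le_mul_of_nonneg_left hgf (by positivity)
  linarith [norm_sub_le_norm_sub_add_norm_sub g f₀ (S.M (S.a g)),
    norm_sub_le_norm_sub_add_norm_sub f₀ (S.M (S.a f₀)) (S.M (S.a g))]

end StableScheme

theorem exists_stableScheme_of_stableWidth_lt (hγ : 0 ≤ γ) (hK : Bornology.IsBounded K) {e : ℝ}
    (h : stableWidth X K n γ < e) :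
    ∃ S : StableScheme X K n γ, ∀ f ∈ K, ‖f - S.M (S.a f)‖ ≤ e := by
  let S₀ : StableScheme X K n γ := .zero hγ
  obtain ⟨_, ⟨nrm, a, M, hnrm, ha, hM, rfl⟩, hlt⟩ := exists_lt_of_csInf_lt
    (by exact ⟨_, S₀.nrm, S₀.a, S₀.M, S₀.isNorm, S₀.a_lipschitz, S₀.M_lipschitz, rfl⟩) h
  let S : StableScheme X K n γ := ⟨nrm, a, M, hnrm, ha, hM⟩
  exact ⟨S, fun f hf => (le_ciSup (S.bddAbove_range_error hγ hK) ⟨f, hf⟩).trans hlt.le⟩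

theorem stableWidth_nonneg (K : Set X) (n : ℕ) (γ : ℝ) : 0 ≤ stableWidth X K n γ :=
  Real.sInf_nonneg fun _ ⟨_, _, _, _, _, _, hd⟩ => hd ▸ Real.iSup_nonneg fun _ => norm_nonneg _

theorem entropyNumber_le_of_subset_iUnion_closedBall {T : Finset X} {ρ : ℝ} (hρ : 0 < ρ)
    (hT : T.card ≤ 2 ^ n) (hK : K ⊆ ⋃ c ∈ T, closedBall c ρ) : entropyNumber X K n ≤ ρ :=
  csInf_le ⟨0, fun _ hε => hε.1.le⟩ ⟨hρ, T, hT, hK⟩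

theorem StableScheme.exists_refined_cover {m : ℕ} (S : StableScheme X K m γ)
    (hγ : 0 < γ) {e ρ : ℝ} (he : 0 < e) (hρ : 0 ≤ ρ) (herr : ∀ f ∈ K, ‖f - S.M (S.a f)‖ ≤ e)
    {T : Finset X} (hT : K ⊆ ⋃ c ∈ T, closedBall c ρ) :
    ∃ T' : Finset X, (T'.card : ℝ) ≤ T.card * ((4 * γ ^ 2 * ρ + e) / e) ^ m ∧
      K ⊆ ⋃ c ∈ T', closedBall c (2 * e) := by
  classical
  have hnet (c : X) : ∃ P : Finset (Fin m → ℝ), (P.card : ℝ) ≤ ((4 * γ ^ 2 * ρ + e) / e) ^ m ∧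
      ∀ f ∈ K ∩ closedBall c ρ, ∃ p ∈ P, S.nrm (S.a f - p) ≤ e / γ := by
    have hdiam : ∀ x ∈ S.a '' (K ∩ closedBall c ρ), ∀ y ∈ S.a '' (K ∩ closedBall c ρ),
        S.nrm (x - y) ≤ 2 * γ * ρ := by
      rintro _ ⟨f, ⟨hfK, hfc⟩, rfl⟩ _ ⟨g, ⟨hgK, hgc⟩, rfl⟩
      calc S.nrm (S.a f - S.a g) ≤ γ * ‖f - g‖ := S.a_lipschitz f hfK g hgK
        _ ≤ γ * (ρ + ρ) := by
          rw [← dist_eq_norm]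
          exact mul_le_mul_of_nonneg_left ((dist_triangle_right f g c).trans (add_le_add hfc hgc))
            hγ.le
        _ = 2 * γ * ρ := by ring
    obtain ⟨P, hcard, hP⟩ := S.isNorm.exists_finset_net (div_pos he hγ) (by positivity) hdiam
    refine ⟨P, hcard.trans_eq ?_, fun f hf => hP _ (Set.mem_image_of_mem _ hf)⟩
    congr 1
    field_simp
    ring
  choose P hPcard hP using hnet
  refine ⟨T.biUnion fun c => (P c).image S.M, ?_, fun f hf => ?_⟩
  · calc ((T.biUnion fun c => (P c).image S.M).card : ℝ)
        ≤ ∑ c ∈ T, (((P c).image S.M).card : ℝ) := by exact_mod_cast Finset.card_biUnion_le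
      _ ≤ ∑ _c ∈ T, ((4 * γ ^ 2 * ρ + e) / e) ^ m :=
        Finset.sum_le_sum fun c _ => (Nat.cast_le.2 Finset.card_image_le).trans (hPcard c)
      _ = T.card * ((4 * γ ^ 2 * ρ + e) / e) ^ m := by simp
  obtain ⟨c, hc, hfc⟩ := Set.mem_iUnion₂.1 (hT hf)
  obtain ⟨p, hp, hfp⟩ := hP c f ⟨hf, hfc⟩
  refine Set.mem_iUnion₂.2 ⟨S.M p, Finset.mem_biUnion.2 ⟨c, hc, Finset.mem_image_of_mem _ hp⟩, ?_⟩
  rw [mem_closedBall, dist_eq_norm]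
  calc ‖f - S.M p‖ ≤ ‖f - S.M (S.a f)‖ + ‖S.M (S.a f) - S.M p‖ :=
        norm_sub_le_norm_sub_add_norm_sub _ _ _
    _ ≤ e + γ * (e / γ) := add_le_add (herr f hf)
        ((S.M_lipschitz _ _).trans (mul_le_mul_of_nonneg_left hfp hγ.le))
    _ = 2 * e := by field_simp; ring

theorem exists_dyadic_cover {r Λ : ℝ} {B : ℕ} (hγ : 0 < γ) (hΛ : 0 < Λ)
    (hB : 8 * γ ^ 2 * (2 : ℝ) ^ r + 1 ≤ 2 ^ B)
    (hS : ∀ m : ℕ, ∃ S : StableScheme X K m γ,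
      ∀ f ∈ K, ‖f - S.M (S.a f)‖ ≤ Λ * ((m : ℝ) + 1) ^ (-r))
    (J : ℕ) : ∃ T : Finset X, T.card ≤ 2 ^ (2 * B * (2 ^ J - 1)) ∧
      K ⊆ ⋃ c ∈ T, closedBall c (2 * Λ * ((2 : ℝ) ^ J) ^ (-r)) := by
  induction J with
  | zero =>
    obtain ⟨S, hS₀⟩ := hS 0
    refine ⟨{S.M 0}, by simp, fun f hf => ?_⟩
    have := hS₀ f hf
    rw [Subsingleton.elim (S.a f) 0] at this
    simp only [Finset.mem_singleton, Set.iUnion_iUnion_eq_left, mem_closedBall, dist_eq_norm]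
    norm_num at this ⊢
    linarith
  | succ J ih =>
    obtain ⟨T, hTcard, hT⟩ := ih
    set m := 2 ^ (J + 1) - 1
    have hm : m + 1 = 2 ^ (J + 1) := Nat.sub_add_cancel Nat.one_le_two_pow
    obtain ⟨S, hSm⟩ := hS m
    have hpow : ((2 : ℝ) ^ (J + 1)) ^ (-r) = ((2 : ℝ) ^ J) ^ (-r) * ((2 : ℝ) ^ r)⁻¹ := by
      rw [pow_succ, Real.mul_rpow (by positivity) zero_le_two, Real.rpow_neg zero_le_two]
    have hm' : (m : ℝ) + 1 = 2 ^ (J + 1) := by exact_mod_cast hm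
    rw [hm'] at hSm
    obtain ⟨T', hcard, hcov⟩ := S.exists_refined_cover hγ (by positivity)
      (by positivity : 0 ≤ 2 * Λ * ((2 : ℝ) ^ J) ^ (-r)) hSm hT
    have hratio : (4 * γ ^ 2 * (2 * Λ * ((2 : ℝ) ^ J) ^ (-r)) + Λ * ((2 : ℝ) ^ (J + 1)) ^ (-r)) /
        (Λ * ((2 : ℝ) ^ (J + 1)) ^ (-r)) = 8 * γ ^ 2 * (2 : ℝ) ^ r + 1 := by
      rw [hpow]
      field_simp
      ring
    rw [hratio] at hcard
    refine ⟨T', ?_, by simpa only [mul_assoc] using hcov⟩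
    have hexp : 2 * B * (2 ^ J - 1) + B * m ≤ 2 * B * (2 ^ (J + 1) - 1) := by
      have : 2 * (2 ^ J - 1) ≤ m := by rw [pow_succ] at hm; omega
      nlinarith
    have hcard' : (T'.card : ℝ) ≤ ((2 ^ (2 * B * (2 ^ J - 1) + B * m) : ℕ) : ℝ) :=
      calc (T'.card : ℝ) ≤ T.card * (8 * γ ^ 2 * (2 : ℝ) ^ r + 1) ^ m := hcard
        _ ≤ (2 ^ (2 * B * (2 ^ J - 1)) : ℕ) * ((2 : ℝ) ^ B) ^ m := by gcongr
        _ = ((2 ^ (2 * B * (2 ^ J - 1) + B * m) : ℕ) : ℝ) := by push_cast; ring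
    exact (Nat.cast_le.1 hcard').trans (Nat.pow_le_pow_right two_pos hexp)

theorem exists_dyadic_scale {B : ℕ} (hB : 0 < B) (n : ℕ) :
    ∃ J : ℕ, 2 * B * (2 ^ J - 1) ≤ n ∧ n + 1 ≤ 4 * B * 2 ^ J := by
  set t := n / (2 * B)
  refine ⟨Nat.log 2 (t + 1), ?_, ?_⟩
  · have h₁ : 2 ^ Nat.log 2 (t + 1) - 1 ≤ t :=
      Nat.sub_le_iff_le_add.2 (Nat.pow_log_le_self 2 (Nat.add_one_ne_zero t))
    calc 2 * B * (2 ^ Nat.log 2 (t + 1) - 1) ≤ 2 * B * t := Nat.mul_le_mul_left _ h₁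
      _ ≤ n := Nat.mul_div_le n (2 * B)
  · have h₂ : t + 1 ≤ 2 * 2 ^ Nat.log 2 (t + 1) :=
      (Nat.lt_pow_succ_log_self one_lt_two (t + 1)).le.trans_eq (pow_succ' 2 _)
    calc n + 1 ≤ 2 * B * (t + 1) := Nat.lt_mul_div_succ n (by omega)
      _ ≤ 2 * B * (2 * 2 ^ Nat.log 2 (t + 1)) := Nat.mul_le_mul_left _ h₂
      _ = 4 * B * 2 ^ Nat.log 2 (t + 1) := by ring

theorem entropyNumber_le_of_stableWidth_lt {r Λ : ℝ} {B : ℕ} (hr : 0 ≤ r) (hγ : 0 < γ)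
    (hB₀ : 0 < B) (hB : 8 * γ ^ 2 * (2 : ℝ) ^ r + 1 ≤ 2 ^ B) (hK : Bornology.IsBounded K)
    (hΛ : ∀ m : ℕ, stableWidth X K m γ < Λ * ((m : ℝ) + 1) ^ (-r)) (n : ℕ) :
    entropyNumber X K n ≤ 2 * (4 * B) ^ r * ((n : ℝ) + 1) ^ (-r) * Λ := by
  have hΛ₀ : 0 < Λ := by simpa using (stableWidth_nonneg K 0 γ).trans_lt (hΛ 0)
  obtain ⟨J, hJn, hnJ⟩ := exists_dyadic_scale hB₀ n
  obtain ⟨T, hTcard, hT⟩ := exists_dyadic_cover hγ hΛ₀ hB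
    (fun m => exists_stableScheme_of_stableWidth_lt hγ.le hK (hΛ m)) J
  refine (entropyNumber_le_of_subset_iUnion_closedBall (by positivity)
    (hTcard.trans (Nat.pow_le_pow_right two_pos hJn)) hT).trans ?_
  have hnJ' : (n : ℝ) + 1 ≤ 4 * B * 2 ^ J := by exact_mod_cast hnJ
  have hscale : ((2 : ℝ) ^ J) ^ (-r) ≤ (4 * B) ^ r * ((n : ℝ) + 1) ^ (-r) :=
    calc ((2 : ℝ) ^ J) ^ (-r) = (4 * B) ^ r * (4 * B * 2 ^ J) ^ (-r) := by
          rw [Real.mul_rpow (x := 4 * B) (by positivity) (by positivity), ← mul_assoc,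
            ← Real.rpow_add (by positivity), add_neg_cancel, Real.rpow_zero, one_mul]
      _ ≤ (4 * B) ^ r * ((n : ℝ) + 1) ^ (-r) := mul_le_mul_of_nonneg_left
          (Real.rpow_le_rpow_of_nonpos (by positivity) hnJ' (by linarith)) (by positivity)
  calc 2 * Λ * ((2 : ℝ) ^ J) ^ (-r) ≤ 2 * Λ * ((4 * B) ^ r * ((n : ℝ) + 1) ^ (-r)) := by gcongr
    _ = 2 * (4 * B) ^ r * ((n : ℝ) + 1) ^ (-r) * Λ := by ring

theorem entropyNumber_le_of_rpow_mul_stableWidth_le {r Λ : ℝ} {B : ℕ} (hr : 0 ≤ r)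
    (hγ : 0 < γ) (hB₀ : 0 < B) (hB : 8 * γ ^ 2 * (2 : ℝ) ^ r + 1 ≤ 2 ^ B)
    (hK : Bornology.IsBounded K) (hΛ : ∀ m : ℕ, ((m : ℝ) + 1) ^ r * stableWidth X K m γ ≤ Λ)
    (n : ℕ) : entropyNumber X K n ≤ 2 * (4 * B) ^ r * ((n : ℝ) + 1) ^ (-r) * Λ := by
  set c := 2 * (4 * B) ^ r * ((n : ℝ) + 1) ^ (-r)
  have hc : 0 < c := by positivity
  refine le_of_forall_gt_imp_ge_of_dense fun t ht => ?_
  have hΛt : Λ < t / c := by rwa [lt_div_iff₀' hc]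
  have hlt (m : ℕ) : stableWidth X K m γ < t / c * ((m : ℝ) + 1) ^ (-r) := by
    have hm : 0 < ((m : ℝ) + 1) ^ r := by positivity
    calc stableWidth X K m γ ≤ Λ * ((m : ℝ) + 1) ^ (-r) := by
          rw [Real.rpow_neg (by positivity), ← div_eq_mul_inv, le_div_iff₀' hm]
          exact hΛ m
      _ < t / c * ((m : ℝ) + 1) ^ (-r) := by gcongr
  simpa [c, mul_div_cancel₀ t hc.ne'] using
    entropyNumber_le_of_stableWidth_lt hr hγ hB₀ hB hK hlt n

end Covering

theorem stmt7.{u} (r γ : ℝ) (hr : 1 ≤ r) (hγ : 1 ≤ γ) :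
    ∃ C : ℝ, 0 < C ∧
      ∀ (X : Type u) [inst : NormedAddCommGroup X] (K : Set X), IsCompact K →
        ∀ Λ : ℝ, (∀ m : ℕ, ((m : ℝ) + 1) ^ r * stableWidth X K m γ ≤ Λ) →
          ∀ n : ℕ, entropyNumber X K n ≤ C * ((n : ℝ) + 1) ^ (-r) * Λ := by
  obtain ⟨B, hB⟩ := pow_unbounded_of_one_lt (8 * γ ^ 2 * (2 : ℝ) ^ r + 1) one_lt_two
  have hB₀ : 0 < B := Nat.pos_of_ne_zero fun h => by
    subst h
    linarith [show 0 < 8 * γ ^ 2 * (2 : ℝ) ^ r by positivity, pow_zero (2 : ℝ)]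
  exact ⟨2 * (4 * B) ^ r, by positivity, fun X _ K hK Λ hΛ n =>
    entropyNumber_le_of_rpow_mul_stableWidth_le (by linarith) (by linarith) hB₀ hB.le
      hK.isBounded hΛ n⟩
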